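/- Let G be a finite simple graph on vertex set V with the requirements: output 1 on s_v (the closed-neighborhood indicator of v) for each vertex v, and output 0 on the all-false assignment s₀. Then G has a dominating set of size at most k if and only if there exists a decision list over V (whose literals may be positive or negated) with at most k conditions and actions in {0, 1} that satisfies all these requirements. -/

import Mathlib

structure DecisionList (V : Type) (A : Type) where
  entries : List ((V × Bool) × A)
  dflt : A

def DecisionList.eval {V A : Type} (L : DecisionList V A) (s : V → Bool) : A :=
  match L.entries.find? (fun e => s e.1.1 == e.1.2) with
  | some e => e.2
  | none => L.dflt

/-! A dominating set `D` yields the list "if some `d ∈ D` holds then 1", default 0. Conversely, a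
list separating each `s_v` from `s₀` must test a variable on which they differ, i.e. a vertex of
the closed neighbourhood of `v`; hence the variables of the list dominate. -/

namespace DecisionList

variable {V A : Type}

theorem eval_congr (L : DecisionList V A) {s t : V → Bool}
    (h : ∀ e ∈ L.entries, s e.1.1 = t e.1.1) : L.eval s = L.eval t := by
  unfold eval
  rw [List.find?_congr fun e he => by rw [h e he]]

def vars [DecidableEq V] (L : DecisionList V A) : Finset V :=
  (L.entries.map (·.1.1)).toFinset

theorem card_vars_le [DecidableEq V] (L : DecisionList V A) :
    L.vars.card ≤ L.entries.length :=
  (List.toFinset_card_le _).trans_eq (List.length_map _)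

theorem exists_mem_vars_ne_of_eval_ne [DecidableEq V] (L : DecisionList V A) {s t : V → Bool}
    (h : L.eval s ≠ L.eval t) : ∃ v ∈ L.vars, s v ≠ t v := by
  contrapose! h
  exact L.eval_congr fun e he => h _ (List.mem_toFinset.mpr (List.mem_map_of_mem he))

def ofPositive (l : List V) (a b : A) : DecisionList V A :=
  ⟨l.map fun d => ((d, true), a), b⟩

open Classical in
theorem eval_ofPositive (l : List V) (a b : A) (s : V → Bool) :
    (ofPositive l a b).eval s = if ∃ d ∈ l, s d = true then a else b := by
  induction l with
  | nil => simp [ofPositive, eval]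
  | cons d l ih =>
    cases hd : s d <;> simp_all [ofPositive, eval]

end DecisionList

open DecisionList in
theorem stmt4_general {V : Type} [DecidableEq V] (G : SimpleGraph V)
    [DecidableRel G.Adj] (k : ℕ) :
    (∃ D : Finset V, D.card ≤ k ∧ ∀ v : V, ∃ d ∈ D, d = v ∨ G.Adj v d) ↔
    (∃ L : DecisionList V ℕ,
      L.entries.length ≤ k ∧
      (∀ e ∈ L.entries, e.2 = 0 ∨ e.2 = 1) ∧ (L.dflt = 0 ∨ L.dflt = 1) ∧
      (∀ v : V, L.eval (fun u => decide (u = v ∨ G.Adj v u)) = 1) ∧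
      L.eval (fun _ => false) = 0) := by
  constructor
  · rintro ⟨D, hcard, hdom⟩
    refine ⟨ofPositive D.toList 1 0, by simpa [ofPositive] using hcard, ?_, Or.inl rfl, ?_, ?_⟩
    · simp [ofPositive]
    · intro v
      obtain ⟨d, hd, hdv⟩ := hdom v
      rw [eval_ofPositive, if_pos ⟨d, Finset.mem_toList.mpr hd, decide_eq_true hdv⟩]
    · simp [eval_ofPositive]
  · rintro ⟨L, hlen, -, -, hdom, hempty⟩
    refine ⟨L.vars, L.card_vars_le.trans hlen, ?_⟩
    intro v
    have hsep : L.eval (fun u => decide (u = v ∨ G.Adj v u)) ≠ L.eval (fun _ => false) := by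
      rw [hdom v, hempty]; exact one_ne_zero
    obtain ⟨d, hd, hne⟩ := L.exists_mem_vars_ne_of_eval_ne hsep
    exact ⟨d, hd, of_decide_eq_true (Bool.not_eq_false _ ▸ hne)⟩

theorem stmt4 {V : Type} [Fintype V] [DecidableEq V] (G : SimpleGraph V)
    [DecidableRel G.Adj] (k : ℕ) :
    (∃ D : Finset V, D.card ≤ k ∧ ∀ v : V, ∃ d ∈ D, d = v ∨ G.Adj v d) ↔
    (∃ L : DecisionList V ℕ,
      L.entries.length ≤ k ∧
      (∀ e ∈ L.entries, e.2 = 0 ∨ e.2 = 1) ∧ (L.dflt = 0 ∨ L.dflt = 1) ∧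
      (∀ v : V, L.eval (fun u => decide (u = v ∨ G.Adj v u)) = 1) ∧
      L.eval (fun _ => false) = 0) :=
  stmt4_general G k
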